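/- arXiv:1912.13221 — 3 statements merged into one kernel-verified Lean document; each statement's English description precedes it below -/
import Mathlib

section
/- For every t ∈ ℝ, the matrix A_t^{KFP} := (1/2)·[[ (1/2)(t − tanh(t)(1 − sinh(t)²)), sinh(t)² ], [ sinh(t)², sinh(2t) ]] is symmetric, and for t ≥ 0 it is positive semidefinite. -/
/-!
Both diagonal entries of `A` are nonnegative for `t ≥ 0` (the upper one because
`tanh t ≤ t`), and the determinant of `2A` equals `sinh t · (t cosh t - sinh t)`, which is
nonnegative because `sinh t ≤ t cosh t` by the mean value theorem and the monotonicity of `cosh`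
on `[0, ∞)`. A symmetric `2 × 2` matrix with nonnegative diagonal and determinant is positive
semidefinite.
-/

open Real Matrix

theorem Real.sinh_le_mul_cosh {t : ℝ} (ht : 0 ≤ t) : sinh t ≤ t * cosh t := by
  rcases ht.eq_or_lt with rfl | ht
  · simp
  obtain ⟨c, ⟨hc0, hct⟩, hslope⟩ := exists_hasDerivAt_eq_slope sinh cosh ht
    continuous_sinh.continuousOn fun x _ ↦ hasDerivAt_sinh x
  have hcosh : cosh c ≤ cosh t :=
    cosh_le_cosh.2 (by rw [abs_of_pos hc0, abs_of_pos ht]; exact hct.le)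
  rw [hslope, sinh_zero, sub_zero, sub_zero, div_le_iff₀ ht] at hcosh
  linarith

theorem Real.tanh_le_self {t : ℝ} (ht : 0 ≤ t) : tanh t ≤ t := by
  rw [tanh_eq_sinh_div_cosh, div_le_iff₀ (cosh_pos t)]
  exact sinh_le_mul_cosh ht

theorem Matrix.dotProduct_mulVec_nonneg_fin_two {R : Type*} [CommRing R] [LinearOrder R]
    [IsStrictOrderedRing R] {a b d : R} (ha : 0 ≤ a) (hd : 0 ≤ d) (hb : b ^ 2 ≤ a * d)
    (x : Fin 2 → R) : 0 ≤ x ⬝ᵥ !![a, b; b, d] *ᵥ x := by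
  have hform : x ⬝ᵥ !![a, b; b, d] *ᵥ x = a * x 0 ^ 2 + 2 * b * x 0 * x 1 + d * x 1 ^ 2 := by
    simp only [dotProduct, mulVec, Fin.sum_univ_two, cons_val_zero, cons_val_one, of_apply]
    ring
  rw [hform]
  rcases ha.eq_or_lt with rfl | ha
  · have hb0 : b = 0 :=
      pow_eq_zero_iff two_ne_zero |>.1 (le_antisymm (by simpa using hb) (sq_nonneg b))
    subst hb0
    simpa using mul_nonneg hd (sq_nonneg (x 1))
  · -- completing the square: `a · q(x) = (a x₀ + b x₁)² + (a d - b²) x₁²`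
    refine nonneg_of_mul_nonneg_right ?_ ha
    nlinarith [sq_nonneg (a * x 0 + b * x 1), mul_nonneg (sub_nonneg.2 hb) (sq_nonneg (x 1))]

theorem AtKFP_symm_posSemidef (t : ℝ)
    (A : Matrix (Fin 2) (Fin 2) ℝ)
    (hA : A = (1/2 : ℝ) •
      !![(1/2) * (t - Real.tanh t * (1 - Real.sinh t ^ 2)), Real.sinh t ^ 2;
         Real.sinh t ^ 2, Real.sinh (2 * t)]) :
    Aᵀ = A ∧ (0 ≤ t → ∀ x : Fin 2 → ℝ, 0 ≤ x ⬝ᵥ A.mulVec x) := by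
  subst hA
  refine ⟨by ext i j; fin_cases i <;> fin_cases j <;> rfl, fun ht x ↦ ?_⟩
  have hs : 0 ≤ sinh t := sinh_nonneg_iff.2 ht
  have hdiag : 0 ≤ t - tanh t * (1 - sinh t ^ 2) := by
    have htanh_le : tanh t ≤ t := tanh_le_self ht
    have htanh_nonneg : 0 ≤ tanh t := by rw [tanh_eq_sinh_div_cosh]; positivity
    nlinarith [mul_nonneg htanh_nonneg (sq_nonneg (sinh t))]
  have hdet : (1/2) * (t - tanh t * (1 - sinh t ^ 2)) * sinh (2 * t)
      = sinh t * (t * cosh t - sinh t) + (sinh t ^ 2) ^ 2 := by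
    rw [tanh_eq_sinh_div_cosh, sinh_two_mul]
    field_simp
    ring
  rw [smul_mulVec, dotProduct_smul, smul_eq_mul]
  refine mul_nonneg (by norm_num) (dotProduct_mulVec_nonneg_fin_two (by positivity)
    (sinh_nonneg_iff.2 (by linarith)) ?_ x)
  rw [hdet]
  linarith [mul_nonneg hs (sub_nonneg.2 (sinh_le_mul_cosh ht))]
end

section
/- For every t ≥ 0, the matrix A_t^{FP} := (1/2)·[[ e^{2t} + 2t + 3 − 4e^t, −4 sinh²(t/2) ], [ −4 sinh²(t/2), 1 − e^{−2t} ]] is symmetric and positive semidefinite. -/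
open Real Matrix

/-- Classical inequality: `2 (e^t - 1) ≤ t (e^t + 1)` for `t ≥ 0`. -/
lemma key_ineq (t : ℝ) (ht : 0 ≤ t) : 2 * (Real.exp t - 1) ≤ t * (Real.exp t + 1) := by
  set f : ℝ → ℝ := fun y => y * Real.exp y + y - 2 * Real.exp y + 2 with hf
  have hd : ∀ y : ℝ, HasDerivAt f ((y - 1) * Real.exp y + 1) y := by
    intro y
    have h1 : HasDerivAt (fun y : ℝ => y * Real.exp y) (1 * Real.exp y + y * Real.exp y) y :=
      (hasDerivAt_id y).mul (Real.hasDerivAt_exp y)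
    have h2 : HasDerivAt f (1 * Real.exp y + y * Real.exp y + 1 - 2 * Real.exp y) y :=
      ((h1.add (hasDerivAt_id y)).sub ((Real.hasDerivAt_exp y).const_mul 2)).add_const 2
    convert h2 using 1
    ring
  have hmono : MonotoneOn f (Set.Ici 0) := by
    apply monotoneOn_of_deriv_nonneg (convex_Ici 0)
    · exact fun y _ => (hd y).continuousAt.continuousWithinAt
    · exact fun y _ => ((hd y).differentiableAt).differentiableWithinAt
    · intro y hy
      rw [(hd y).deriv]
      have h3 : 1 - y ≤ Real.exp (-y) := by linarith [Real.add_one_le_exp (-y)]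
      have h4 : (1 - y) * Real.exp y ≤ Real.exp (-y) * Real.exp y :=
        mul_le_mul_of_nonneg_right h3 (Real.exp_pos y).le
      rw [← Real.exp_add] at h4
      simp at h4
      nlinarith
  have h0 : f 0 ≤ f t := hmono (by simp) (by simpa using ht) ht
  simp [hf] at h0
  nlinarith [h0]

/-- A 2×2 quadratic form with nonnegative diagonal and nonnegative determinant
is positive semidefinite. -/
lemma quad_nonneg (a b c x y : ℝ) (hc : 0 ≤ c) (ha : 0 ≤ a) (hd : 0 ≤ a * c - b ^ 2) :
    0 ≤ a * x ^ 2 + 2 * b * x * y + c * y ^ 2 := by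
  rcases eq_or_lt_of_le hc with h | h
  · have hb : b = 0 := by nlinarith [sq_nonneg b]
    rw [← h, hb]; nlinarith [mul_nonneg ha (sq_nonneg x)]
  · nlinarith [sq_nonneg (b * x + c * y), mul_nonneg hd (sq_nonneg x)]

theorem AtFP_symm_posSemidef (t : ℝ) (ht : 0 ≤ t)
    (A : Matrix (Fin 2) (Fin 2) ℝ)
    (hA : A = (1/2 : ℝ) •
      !![Real.exp (2 * t) + 2 * t + 3 - 4 * Real.exp t, -4 * Real.sinh (t / 2) ^ 2;
         -4 * Real.sinh (t / 2) ^ 2, 1 - Real.exp (-2 * t)]) :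
    Aᵀ = A ∧ ∀ x : Fin 2 → ℝ, 0 ≤ x ⬝ᵥ A.mulVec x := by
  subst hA
  constructor
  · ext i j
    fin_cases i <;> fin_cases j <;> simp
  · intro x
    set a : ℝ := Real.exp (2 * t) + 2 * t + 3 - 4 * Real.exp t with ha_def
    set b : ℝ := -4 * Real.sinh (t / 2) ^ 2 with hb_def
    set c : ℝ := 1 - Real.exp (-2 * t) with hc_def
    clear_value a b c
    have hform : x ⬝ᵥ ((1/2 : ℝ) • !![a, b; b, c]).mulVec x
        = (1/2) * (a * (x 0) ^ 2 + 2 * b * (x 0) * (x 1) + c * (x 1) ^ 2) := by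
      simp [dotProduct, Matrix.mulVec, Fin.sum_univ_two]
      ring
    rw [hform]
    have hu1 : (1 : ℝ) ≤ Real.exp t := by
      rw [← Real.exp_zero]; exact Real.exp_le_exp.mpr ht
    have hu0 : (0 : ℝ) < Real.exp t := Real.exp_pos t
    have he2 : Real.exp (2 * t) = Real.exp t ^ 2 := by
      rw [two_mul, Real.exp_add, sq]
    have hen : Real.exp (-2 * t) = (Real.exp t ^ 2)⁻¹ := by
      rw [← he2, ← Real.exp_neg]; ring_nf
    have hb' : b = -(Real.exp t + (Real.exp t)⁻¹ - 2) := by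
      have h1 : Real.exp (t/2) ^ 2 = Real.exp t := by
        rw [sq, ← Real.exp_add]; ring_nf
      have h2 : Real.exp (-(t/2)) ^ 2 = (Real.exp t)⁻¹ := by
        rw [sq, ← Real.exp_add, ← Real.exp_neg]; ring_nf
      have h3 : Real.exp (t/2) * Real.exp (-(t/2)) = 1 := by
        rw [← Real.exp_add]; simp
      rw [hb_def, Real.sinh_eq]
      linear_combination -h1 - h2 + 2 * h3
    have hc' : 0 ≤ c := by
      rw [hc_def, hen]
      have h4 : (Real.exp t ^ 2)⁻¹ ≤ 1 := by
        rw [inv_le_one_iff₀]; right; nlinarith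
      linarith
    have hkey := key_ineq t ht
    have ha' : 0 ≤ a := by
      rw [ha_def, he2]
      have h5 : (0:ℝ) ≤ (Real.exp t - 1) ^ 3 := pow_nonneg (by linarith) 3
      nlinarith [h5, hkey, hu0]
    have hdet : 0 ≤ a * c - b ^ 2 := by
      have hdet_eq : a * c - b ^ 2
          = (Real.exp t ^ 2)⁻¹ * (Real.exp t - 1) *
            (t * (Real.exp t + 1) * 2 - 4 * (Real.exp t - 1)) := by
        rw [ha_def, hc_def, hb', he2, hen]
        field_simp
        ring
      rw [hdet_eq]
      have h1 : (0:ℝ) ≤ (Real.exp t ^ 2)⁻¹ * (Real.exp t - 1) :=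
        mul_nonneg (by positivity) (by linarith)
      have h2 : (0:ℝ) ≤ t * (Real.exp t + 1) * 2 - 4 * (Real.exp t - 1) := by linarith
      exact mul_nonneg h1 h2
    have hq := quad_nonneg a b c (x 0) (x 1) hc' ha' hdet
    linarith
end

section
/- Let Q be a real symmetric positive definite 2n×2n matrix. Then there exist a real symplectic matrix P ∈ Sp(2n, ℝ) and positive reals ω₁, …, ωₙ such that Pᵀ Q P = diag(ω₁, …, ωₙ, ω₁, …, ωₙ) (Williamson's normal form). -/
/-!
Congruence by `S = Q^{-1/2}` turns `Q` into the identity and `J` into the invertible skew-symmetric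
matrix `SᵀJS`. An injective skew-adjoint operator `f` has an orthonormal basis in which it is
block-diagonal with blocks `[[0, d], [-d, 0]]`, `d > 0`: a unit eigenvector `u` of the symmetric
operator `f²` and `f u / ‖f u‖` span an `f`-invariant plane, whose orthogonal complement is again
`f`-invariant. Conjugating `SᵀJS` by this orthogonal basis and rescaling each plane by `d^{-1/2}`
gives a symplectic `P` with `PᵀQP = diag(d⁻¹, d⁻¹)`.
-/

open Module
open scoped RealInnerProductSpace

section SkewOperator

universe u

variable {V : Type u} [NormedAddCommGroup V] [InnerProductSpace ℝ V] {f : V →ₗ[ℝ] V}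

lemma inner_apply_self_eq_zero_of_skew (hf : ∀ x y, ⟪f x, y⟫ = -⟪x, f y⟫) (x : V) :
    ⟪f x, x⟫ = 0 := by
  have := hf x x
  rw [real_inner_comm (f x) x] at this
  linarith

lemma isSymmetric_comp_self_of_skew (hf : ∀ x y, ⟪f x, y⟫ = -⟪x, f y⟫) :
    (f ∘ₗ f).IsSymmetric := fun x y => by
  simp only [LinearMap.comp_apply, hf, neg_neg]

lemma orthogonal_le_comap_of_skew (hf : ∀ x y, ⟪f x, y⟫ = -⟪x, f y⟫) {K : Submodule ℝ V}
    (hK : K ≤ K.comap f) : Kᗮ ≤ Kᗮ.comap f := fun w hw y hy => by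
  rw [real_inner_comm, hf, real_inner_comm,
    Submodule.inner_right_of_mem_orthogonal (K := K) (hK hy) hw, neg_zero]

lemma exists_orthonormal_pair_of_skew [FiniteDimensional ℝ V] [Nontrivial V]
    (hf : ∀ x y, ⟪f x, y⟫ = -⟪x, f y⟫) (hinj : Function.Injective f) :
    ∃ (u v : V) (c : ℝ), 0 < c ∧ Orthonormal ℝ ![u, v] ∧ f u = c • v ∧ f v = -(c • u) := by
  obtain ⟨μ, u, hu, hfu⟩ : ∃ (μ : ℝ) (u : V), ‖u‖ = 1 ∧ f (f u) = μ • u := by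
    obtain ⟨w, hw⟩ := (isSymmetric_comp_self_of_skew hf).hasEigenvalue_iSup_of_finiteDimensional
      |>.exists_hasEigenvector
    exact ⟨_, ‖w‖⁻¹ • w, norm_smul_inv_norm hw.2, by
      rw [map_smul, map_smul, ← LinearMap.comp_apply, hw.apply_eq_smul, smul_comm]⟩
  have hμ : μ = -‖f u‖ ^ 2 := by
    have := hf (f u) u
    rw [hfu, real_inner_smul_left, real_inner_self_eq_norm_sq, hu, real_inner_self_eq_norm_sq]
      at this
    linarith
  set c := ‖f u‖
  have hc : 0 < c := norm_pos_iff.2 fun h => by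
    simp [(injective_iff_map_eq_zero f).1 hinj u h] at hu
  refine ⟨u, c⁻¹ • f u, c, hc, ?_, by rw [smul_inv_smul₀ hc.ne'], ?_⟩
  · rw [orthonormal_iff_ite]
    have hv : ‖c⁻¹ • f u‖ = 1 := norm_smul_inv_norm (norm_pos_iff.1 hc)
    have huv : ⟪u, c⁻¹ • f u⟫ = 0 := by
      rw [real_inner_smul_right, real_inner_comm, inner_apply_self_eq_zero_of_skew hf, mul_zero]
    intro i j
    fin_cases i <;> fin_cases j <;>
      simp [hu, hv, huv, real_inner_comm u]
  · rw [map_smul, hfu, hμ, smul_smul, mul_neg, neg_smul, sq, inv_mul_cancel_left₀ hc.ne']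

/-- `f` has matrix `fromBlocks 0 (diagonal d) (-diagonal d) 0` in the orthonormal family `b`. -/
structure IsSkewNormalForm {ι : Type*} (f : V →ₗ[ℝ] V) (b : ι ⊕ ι → V) (d : ι → ℝ) : Prop where
  orthonormal : Orthonormal ℝ b
  pos : ∀ i, 0 < d i
  apply_inl : ∀ i, f (b (.inl i)) = -(d i • b (.inr i))
  apply_inr : ∀ i, f (b (.inr i)) = d i • b (.inl i)

lemma IsSkewNormalForm.comp_equiv {ι κ : Type*} {b : ι ⊕ ι → V} {d : ι → ℝ}
    (h : IsSkewNormalForm f b d) (e : κ ≃ ι) :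
    IsSkewNormalForm f (b ∘ Sum.map e e) (d ∘ e) where
  orthonormal := h.orthonormal.comp _ (Sum.map_injective.2 ⟨e.injective, e.injective⟩)
  pos i := h.pos (e i)
  apply_inl i := h.apply_inl (e i)
  apply_inr i := h.apply_inr (e i)

lemma IsSkewNormalForm.option {ι : Type*} {W : Submodule ℝ V} (hW : W ≤ W.comap f)
    {b : ι ⊕ ι → W} {d : ι → ℝ} (h : IsSkewNormalForm (f.restrict hW) b d) {u v : V} {c : ℝ}
    (hc : 0 < c) (huv : Orthonormal ℝ ![u, v]) (hu : u ∈ Wᗮ) (hv : v ∈ Wᗮ)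
    (hfu : f u = c • v) (hfv : f v = -(c • u)) :
    IsSkewNormalForm f
      (Sum.elim (fun o : Option ι => o.elim v fun i => b (.inl i))
        (fun o : Option ι => o.elim u fun i => b (.inr i)))
      (fun o : Option ι => o.elim c d) where
  orthonormal := by
    classical
    have hb x y : ⟪(b x : V), b y⟫ = if x = y then 1 else 0 :=
      orthonormal_iff_ite.1 h.orthonormal x y
    have hp := orthonormal_iff_ite.1 huv
    have hu1 : ‖u‖ = 1 := huv.1 0
    have hv1 : ‖v‖ = 1 := huv.1 1
    have huv' : ⟪u, v⟫ = 0 := by simpa using hp 0 1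
    have hvu : ⟪v, u⟫ = 0 := by simpa using hp 1 0
    have hbu x : ⟪(b x : V), u⟫ = 0 := Submodule.inner_right_of_mem_orthogonal (b x).2 hu
    have hbv x : ⟪(b x : V), v⟫ = 0 := Submodule.inner_right_of_mem_orthogonal (b x).2 hv
    have hub x : ⟪u, (b x : V)⟫ = 0 := by rw [real_inner_comm, hbu]
    have hvb x : ⟪v, (b x : V)⟫ = 0 := by rw [real_inner_comm, hbv]
    rw [orthonormal_iff_ite]
    rintro ((_ | i) | (_ | i)) ((_ | j) | (_ | j)) <;>
      simp [hb, hbu, hbv, hub, hvb, hu1, hv1, huv', hvu]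
  pos o := by cases o <;> simp [hc, h.pos]
  apply_inl o := by
    cases o
    · exact hfv
    · exact congrArg Subtype.val (h.apply_inl _)
  apply_inr o := by
    cases o
    · exact hfu
    · exact congrArg Subtype.val (h.apply_inr _)

theorem exists_isSkewNormalForm (ι : Type*) [Fintype ι] [FiniteDimensional ℝ V]
    (hf : ∀ x y, ⟪f x, y⟫ = -⟪x, f y⟫) (hinj : Function.Injective f)
    (hdim : finrank ℝ V = 2 * Fintype.card ι) :
    ∃ (b : ι ⊕ ι → V) (d : ι → ℝ), IsSkewNormalForm f b d := by
  refine Fintype.induction_empty_option (P := fun ι _ => ∀ {V : Type u} [NormedAddCommGroup V]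
    [InnerProductSpace ℝ V] [FiniteDimensional ℝ V] {f : V →ₗ[ℝ] V},
    (∀ x y, ⟪f x, y⟫ = -⟪x, f y⟫) → Function.Injective f → finrank ℝ V = 2 * Fintype.card ι →
    ∃ (b : ι ⊕ ι → V) (d : ι → ℝ), IsSkewNormalForm f b d) ?_ ?_ ?_ ι hf hinj hdim
  · intro α β _ e ih V _ _ _ f hf hinj hdim
    obtain ⟨b, d, h⟩ := ih hf hinj (by rw [hdim, Fintype.ofEquiv_card])
    exact ⟨_, _, h.comp_equiv e.symm⟩
  · intro V _ _ _ f _ _ _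
    exact ⟨isEmptyElim, isEmptyElim, .of_isEmpty _, isEmptyElim, isEmptyElim, isEmptyElim⟩
  · intro ι _ ih V _ _ _ f hf hinj hdim
    have : Nontrivial V := Module.nontrivial_of_finrank_pos (R := ℝ) (by simp [hdim])
    obtain ⟨u, v, c, hc, huv, hfu, hfv⟩ := exists_orthonormal_pair_of_skew hf hinj
    set K := Submodule.span ℝ (Set.range ![u, v])
    have hu : u ∈ K := Submodule.subset_span ⟨0, rfl⟩
    have hv : v ∈ K := Submodule.subset_span ⟨1, rfl⟩
    have hK : K ≤ K.comap f := Submodule.span_le.2 <| Set.range_subset_iff.2 fun i => by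
      fin_cases i
      · simpa [hfu] using K.smul_mem c hv
      · simpa [hfv] using K.smul_mem c hu
    have hKdim : finrank ℝ K = 2 := by simp [K, finrank_span_eq_card huv.linearIndependent]
    have hKperp := orthogonal_le_comap_of_skew hf hK
    obtain ⟨b, d, h⟩ := ih (f := f.restrict hKperp) (fun x y => hf x y)
      (fun x y hxy => Subtype.ext (hinj (congrArg Subtype.val hxy)))
      (by have := K.finrank_add_finrank_orthogonal; rw [Fintype.card_option] at hdim; omega)
    exact ⟨_, _, h.option hKperp hc huv (K.le_orthogonal_orthogonal hu)
      (K.le_orthogonal_orthogonal hv) hfu hfv⟩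

end SkewOperator

namespace Matrix

variable {m l : Type*} [Fintype m] [DecidableEq m] [Fintype l] [DecidableEq l]

lemma transpose_of_mul_mul_of_apply {κ : Type*} (A : Matrix m m ℝ)
    (b : κ → EuclideanSpace ℝ m) (i j : κ) :
    ((of fun i j => b j i)ᵀ * A * of fun i j => b j i) i j = ⟪b i, toEuclideanLin A (b j)⟫ := by
  simp only [mul_apply, transpose_apply, of_apply, Finset.sum_mul, toLpLin_apply,
    EuclideanSpace.inner_eq_star_dotProduct, dotProduct, mulVec, star_trivial]
  rw [Finset.sum_comm]
  exact Finset.sum_congr rfl fun _ _ => Finset.sum_congr rfl fun _ _ => by ring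

lemma inner_toEuclideanLin_of_transpose_eq_neg {A : Matrix m m ℝ} (hA : Aᵀ = -A)
    (x y : EuclideanSpace ℝ m) : ⟪toEuclideanLin A x, y⟫ = -⟪x, toEuclideanLin A y⟫ := by
  rw [← LinearMap.adjoint_inner_right, ← toEuclideanLin_conjTranspose_eq_adjoint,
    conjTranspose_eq_transpose_of_trivial, hA, map_neg, LinearMap.neg_apply, inner_neg_right]

lemma injective_toEuclideanLin {A : Matrix m m ℝ} (hA : IsUnit A) :
    Function.Injective (toEuclideanLin A) := fun x y hxy =>
  WithLp.ofLp_injective 2 <|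
    mulVec_injective_iff_isUnit.2 hA (by simpa using congrArg WithLp.ofLp hxy)

theorem exists_orthogonal_transpose_mul_mul_eq_fromBlocks {M : Matrix (l ⊕ l) (l ⊕ l) ℝ}
    (hM : Mᵀ = -M) (hMu : IsUnit M) :
    ∃ (O : Matrix (l ⊕ l) (l ⊕ l) ℝ) (d : l → ℝ), Oᵀ * O = 1 ∧ (∀ i, 0 < d i) ∧
      Oᵀ * M * O = fromBlocks 0 (diagonal d) (-diagonal d) 0 := by
  obtain ⟨b, d, h⟩ := exists_isSkewNormalForm l (inner_toEuclideanLin_of_transpose_eq_neg hM)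
    (injective_toEuclideanLin hMu) (by simp [two_mul])
  have hb := orthonormal_iff_ite.1 h.orthonormal
  refine ⟨of fun i j => b j i, d, ?_, h.pos, ?_⟩
  · ext i j
    simpa [hb, one_apply] using transpose_of_mul_mul_of_apply 1 b i j
  · ext (i | i) (j | j) <;>
      simp [transpose_of_mul_mul_of_apply, h.apply_inl, h.apply_inr, real_inner_smul_right, hb,
        diagonal_apply] <;>
      split_ifs <;> simp_all

open scoped MatrixOrder in
lemma PosDef.exists_isUnit_transpose_mul_mul_eq_one {Q : Matrix m m ℝ} (hQ : Q.PosDef) :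
    ∃ S : Matrix m m ℝ, IsUnit S ∧ Sᵀ * Q * S = 1 := by
  set R := CFC.sqrt Q
  have hRR : R * R = Q := CFC.sqrt_mul_sqrt_self Q hQ.posSemidef.nonneg
  have hRT : Rᵀ = R := by
    simpa [IsHermitian] using (nonneg_iff_posSemidef.1 (CFC.sqrt_nonneg Q)).1
  have hR : IsUnit R.det :=
    (isUnit_iff_isUnit_det R).1 <| isUnit_of_mul_isUnit_left (hRR ▸ hQ.isUnit)
  refine ⟨R⁻¹, isUnit_nonsing_inv_iff.2 ((isUnit_iff_isUnit_det R).2 hR), ?_⟩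
  rw [transpose_nonsing_inv, hRT, ← hRR, Matrix.mul_assoc, Matrix.mul_assoc, mul_nonsing_inv _ hR,
    Matrix.mul_one, nonsing_inv_mul _ hR]

lemma diagonal_mul_fromBlocks_mul_diagonal {R : Type*} [CommRing R] (s d : l → R) :
    diagonal (Sum.elim s s) * fromBlocks 0 (diagonal d) (-diagonal d) 0 *
      diagonal (Sum.elim s s) = fromBlocks 0 (diagonal (s * d * s)) (-diagonal (s * d * s)) 0 := by
  rw [← fromBlocks_diagonal, fromBlocks_multiply, fromBlocks_multiply]
  simp [diagonal_mul_diagonal, Pi.mul_def]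

end Matrix

open Matrix

theorem williamson_normal_form (n : ℕ)
    (Q : Matrix (Fin n ⊕ Fin n) (Fin n ⊕ Fin n) ℝ) (hQ : Q.PosDef)
    (J : Matrix (Fin n ⊕ Fin n) (Fin n ⊕ Fin n) ℝ)
    (hJ : J = Matrix.fromBlocks 0 1 (-1) 0) :
    ∃ (P : Matrix (Fin n ⊕ Fin n) (Fin n ⊕ Fin n) ℝ) (ω : Fin n → ℝ),
      Pᵀ * J * P = J ∧ (∀ j, 0 < ω j) ∧
      Pᵀ * Q * P = Matrix.diagonal (Sum.elim ω ω) := by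
  obtain ⟨S, hS, hSQS⟩ := hQ.exists_isUnit_transpose_mul_mul_eq_one
  have hJT : Jᵀ = -J := by simp [hJ, fromBlocks_transpose, fromBlocks_neg]
  have hJu : IsUnit J :=
    IsUnit.of_mul_eq_one (-J) (by simp [hJ, fromBlocks_multiply, fromBlocks_neg, fromBlocks_one])
  obtain ⟨O, d, hO, hd, hOJO⟩ := exists_orthogonal_transpose_mul_mul_eq_fromBlocks
    (M := Sᵀ * J * S) (by simp [hJT, Matrix.mul_assoc])
    (((isUnit_transpose S).2 hS |>.mul hJu).mul hS)
  set s : Fin n → ℝ := fun i => (√(d i))⁻¹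
  have hss : s * s = d⁻¹ := funext fun i => by
    simp [s, ← mul_inv, Real.mul_self_sqrt (hd i).le]
  have hsds : s * d * s = 1 := by
    rw [mul_right_comm, hss]
    exact funext fun i => inv_mul_cancel₀ (hd i).ne'
  refine ⟨S * O * diagonal (Sum.elim s s), d⁻¹, ?_, fun i => inv_pos.2 (hd i), ?_⟩
  · calc _ = diagonal (Sum.elim s s) * (Oᵀ * (Sᵀ * J * S) * O) * diagonal (Sum.elim s s) := by
          simp [Matrix.mul_assoc]
      _ = J := by rw [hOJO, diagonal_mul_fromBlocks_mul_diagonal, hsds, hJ]; simp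
  · calc _ = diagonal (Sum.elim s s) * (Oᵀ * (Sᵀ * Q * S) * O) * diagonal (Sum.elim s s) := by
          simp [Matrix.mul_assoc]
      _ = diagonal (Sum.elim (s * s) (s * s)) := by
          rw [hSQS, Matrix.mul_one, hO, Matrix.mul_one, diagonal_mul_diagonal]
          congr 1
          ext (i | i) <;> rfl
      _ = _ := by rw [hss]
end
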